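/- arXiv:1408.6912 — 3 statements merged into one kernel-verified Lean document; each statement's English description precedes it below -/
import Mathlib

section
/- Let f : ℝ^N → ℝ^N, h : ℝ^N → ℝ^M, and K : ℝ^M → ℝ^N be C¹ maps with f(0)=0, h(0)=0, K(0)=0, and define g(x,ξ) := f(x) − ξ·K(h(x)) for ξ ∈ {0,1}. Assume the Jacobian ∂g/∂x(x,ξ) is uniformly bounded in operator norm over all x ∈ ℝ^N and ξ ∈ {0,1}. Fix 0 < p < 1. For an erasure sequence ξ = (ξ_0, ξ_1, …) ∈ {0,1}^ℕ and initial data x_0, e_0, η_0 ∈ ℝ^N define x_{t+1} = f(x_t), the nonlinear observer error e_{t+1} = g(x_t, ξ_t) − g(x_t − e_t, ξ_t), and the linearized error η_{t+1} = (Df(x_t) − ξ_t·D(K∘h)(x_t)) η_t. If there exist L < ∞ and 0 < β < 1 such that for all x_0, e_0 ∈ ℝ^N and all t ≥ 0 one has E_{ξ_0^t}[‖e_{t+1}‖²] ≤ L β^t ‖e_0‖², then for all x_0, η_0 ∈ ℝ^N and all t ≥ 0 one also has E_{ξ_0^t}[‖η_{t+1}‖²] ≤ L β^t ‖η_0‖²,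 i.e. MSE stability of the nonlinear error dynamics implies MSE stability of the linearized error dynamics. -/
open Matrix

noncomputable section

abbrev Euc (n : ℕ) := EuclideanSpace ℝ (Fin n)

/-- Expectation over i.i.d. Bernoulli(p) erasure prefixes (ξ_0,…,ξ_t):
`E_{ξ_0^t}[G] = ∑_{s ∈ {0,1}^{t+1}} p^{#{i : s_i = 1}} (1−p)^{#{i : s_i = 0}} G(s)`. -/
def erasureExp (p : ℝ) (t : ℕ) (G : (ℕ → Bool) → ℝ) : ℝ :=
  ∑ s : Fin (t + 1) → Bool,
    (∏ i, if s i then p else 1 - p) *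
      G (fun n => if h : n < t + 1 then s ⟨n, h⟩ else false)

variable {N M : ℕ}

/-- `g(x, ξ) := f(x) − ξ·K(h(x))`. -/
def gmap (f : Euc N → Euc N) (h : Euc N → Euc M) (K : Euc M → Euc N)
    (x : Euc N) (ξ : Bool) : Euc N :=
  f x - (if ξ then (1 : ℝ) else 0) • K (h x)

/-- Nonlinear observer error dynamics `e_{t+1} = g(x_t, ξ_t) − g(x_t − e_t, ξ_t)`
along `x_{t+1} = f(x_t)`, `x_0 = x0`, `e_0 = e0`. -/
def errSeq (f : Euc N → Euc N) (h : Euc N → Euc M) (K : Euc M → Euc N)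
    (x0 e0 : Euc N) (ξ : ℕ → Bool) : ℕ → Euc N
  | 0 => e0
  | t + 1 =>
      gmap f h K (f^[t] x0) (ξ t) -
        gmap f h K (f^[t] x0 - errSeq f h K x0 e0 ξ t) (ξ t)

/-- Linearized error dynamics `η_{t+1} = (Df(x_t) − ξ_t·D(K∘h)(x_t)) η_t`
along `x_{t+1} = f(x_t)`. -/
def etaSeq (f : Euc N → Euc N) (h : Euc N → Euc M) (K : Euc M → Euc N)
    (x0 η0 : Euc N) (ξ : ℕ → Bool) : ℕ → Euc N
  | 0 => η0
  | t + 1 =>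
      fderiv ℝ f (f^[t] x0) (etaSeq f h K x0 η0 ξ t) -
        (if ξ t then (1 : ℝ) else 0) •
          fderiv ℝ (K ∘ h) (f^[t] x0) (etaSeq f h K x0 η0 ξ t)

/-! Since `e ≡ 0` solves the error recursion, the chain rule makes `η_t` the derivative of
`r ↦ e_t` at `r = 0` for the initial error `e_0 = r • η_0`, for every erasure pattern. Hence
`E‖e_{t+1}‖² / r² → E‖η_{t+1}‖²` as `r → 0`, while the MSE bound for `e` is homogeneous of degree
two in `e_0` and so passes to the limit. -/

open Filter Topology

theorem HasDerivAt.norm_sq_div_sq_tendsto {E : Type*} [NormedAddCommGroup E] [NormedSpace ℝ E]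
    {ψ : ℝ → E} {v : E} (hψ : HasDerivAt ψ v 0) (hψ0 : ψ 0 = 0) :
    Tendsto (fun r => ‖ψ r‖ ^ 2 / r ^ 2) (𝓝[≠] 0) (𝓝 (‖v‖ ^ 2)) := by
  have hslope : Tendsto (fun r => ‖slope ψ 0 r‖ ^ 2) (𝓝[≠] 0) (𝓝 (‖v‖ ^ 2)) :=
    ((continuous_norm.pow 2).tendsto v).comp (hasDerivAt_iff_tendsto_slope.mp hψ)
  refine hslope.congr fun r => ?_
  rw [slope_def_module, hψ0, sub_zero, sub_zero, norm_smul, mul_pow, norm_inv,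
    Real.norm_eq_abs, inv_pow, sq_abs, inv_mul_eq_div]

theorem HasDerivAt.sub_comp_sub {E F : Type*} [NormedAddCommGroup E] [NormedSpace ℝ E]
    [NormedAddCommGroup F] [NormedSpace ℝ F] {G : E → F} {x : E} (hG : DifferentiableAt ℝ G x)
    {c : ℝ → E} {v : E} (hc : HasDerivAt c v 0) (hc0 : c 0 = 0) :
    HasDerivAt (fun r => G x - G (x - c r)) (fderiv ℝ G x v) 0 := by
  have hG' : HasFDerivAt G (fderiv ℝ G x) (x - c 0) := by
    simpa [hc0] using hG.hasFDerivAt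
  simpa using (hG'.comp_hasDerivAt 0 ((hasDerivAt_const 0 x).sub hc)).const_sub (G x)

theorem erasureExp_div_const (p : ℝ) (t : ℕ) (G : (ℕ → Bool) → ℝ) (c : ℝ) :
    erasureExp p t (fun ξ => G ξ / c) = erasureExp p t G / c := by
  simp only [erasureExp, Finset.sum_div, mul_div_assoc]

theorem tendsto_erasureExp {α : Type*} {l : Filter α} (p : ℝ) (t : ℕ)
    {G : α → (ℕ → Bool) → ℝ} {G₀ : (ℕ → Bool) → ℝ}
    (hG : ∀ ξ, Tendsto (fun a => G a ξ) l (𝓝 (G₀ ξ))) :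
    Tendsto (fun a => erasureExp p t (G a)) l (𝓝 (erasureExp p t G₀)) :=
  tendsto_finsetSum _ fun _ _ => (hG _).const_mul _

section ErrorDynamics

variable {f : Euc N → Euc N} {h : Euc N → Euc M} {K : Euc M → Euc N}

theorem fderiv_gmap_apply (hf : Differentiable ℝ f) (hKh : Differentiable ℝ (K ∘ h))
    (x : Euc N) (ξ : Bool) (v : Euc N) :
    fderiv ℝ (fun y => gmap f h K y ξ) x v =
      fderiv ℝ f x v - (if ξ then (1 : ℝ) else 0) • fderiv ℝ (K ∘ h) x v := by
  have hg : (fun y => gmap f h K y ξ) = fun y => f y - (if ξ then (1 : ℝ) else 0) • (K ∘ h) y :=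
    rfl
  rw [hg, fderiv_fun_sub (hf x) ((hKh x).fun_const_smul _), fderiv_fun_const_smul (hKh x)]
  rfl

theorem errSeq_zero_initial (x0 : Euc N) (ξ : ℕ → Bool) : ∀ t, errSeq f h K x0 0 ξ t = 0
  | 0 => rfl
  | t + 1 => by simp [errSeq, errSeq_zero_initial x0 ξ t]

theorem hasDerivAt_errSeq_smul (hf : Differentiable ℝ f) (hKh : Differentiable ℝ (K ∘ h))
    (x0 η0 : Euc N) (ξ : ℕ → Bool) (t : ℕ) :
    HasDerivAt (fun r : ℝ => errSeq f h K x0 (r • η0) ξ t) (etaSeq f h K x0 η0 ξ t) 0 := by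
  induction t with
  | zero =>
    show HasDerivAt (fun r : ℝ => r • η0) η0 0
    simpa only [one_smul] using (hasDerivAt_id' (0 : ℝ)).smul_const η0
  | succ t ih =>
    have hg : Differentiable ℝ (fun y => gmap f h K y (ξ t)) := hf.sub (hKh.fun_const_smul _)
    rw [etaSeq, ← fderiv_gmap_apply hf hKh]
    exact HasDerivAt.sub_comp_sub (hg _) ih (by rw [zero_smul, errSeq_zero_initial])

end ErrorDynamics

theorem mse_stability_of_error_implies_mse_stability_of_linearized_general
    (f : Euc N → Euc N) (h : Euc N → Euc M) (K : Euc M → Euc N)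
    (hf : ContDiff ℝ 1 f) (hh : ContDiff ℝ 1 h) (hK : ContDiff ℝ 1 K)
    (p : ℝ)
    (L β : ℝ)
    (hMSE : ∀ (x0 e0 : Euc N) (t : ℕ),
      erasureExp p t (fun ξ => ‖errSeq f h K x0 e0 ξ (t + 1)‖ ^ 2) ≤
        L * β ^ t * ‖e0‖ ^ 2) :
    ∀ (x0 η0 : Euc N) (t : ℕ),
      erasureExp p t (fun ξ => ‖etaSeq f h K x0 η0 ξ (t + 1)‖ ^ 2) ≤
        L * β ^ t * ‖η0‖ ^ 2 := by
  intro x0 η0 t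
  have hf' : Differentiable ℝ f := hf.differentiable one_ne_zero
  have hKh : Differentiable ℝ (K ∘ h) := (hK.comp hh).differentiable one_ne_zero
  have hlim : Tendsto
      (fun r : ℝ => erasureExp p t (fun ξ => ‖errSeq f h K x0 (r • η0) ξ (t + 1)‖ ^ 2) / r ^ 2)
      (𝓝[≠] 0) (𝓝 (erasureExp p t (fun ξ => ‖etaSeq f h K x0 η0 ξ (t + 1)‖ ^ 2))) := by
    simp_rw [← erasureExp_div_const]
    exact tendsto_erasureExp p t fun ξ =>
      (hasDerivAt_errSeq_smul hf' hKh x0 η0 ξ (t + 1)).norm_sq_div_sq_tendsto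
        (by rw [zero_smul, errSeq_zero_initial])
  refine le_of_tendsto hlim (eventually_mem_nhdsWithin.mono fun r (hr : r ≠ 0) => ?_)
  rw [div_le_iff₀ (by positivity)]
  calc erasureExp p t (fun ξ => ‖errSeq f h K x0 (r • η0) ξ (t + 1)‖ ^ 2)
      ≤ L * β ^ t * ‖r • η0‖ ^ 2 := hMSE x0 (r • η0) t
    _ = L * β ^ t * ‖η0‖ ^ 2 * r ^ 2 := by
      rw [norm_smul, Real.norm_eq_abs, mul_pow, sq_abs]; ring

/-- MSE stability of the nonlinear observer error dynamics implies
MSE stability of the linearized error dynamics (with the same constants). -/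
theorem mse_stability_of_error_implies_mse_stability_of_linearized
    (f : Euc N → Euc N) (h : Euc N → Euc M) (K : Euc M → Euc N)
    (hf : ContDiff ℝ 1 f) (hh : ContDiff ℝ 1 h) (hK : ContDiff ℝ 1 K)
    (hf0 : f 0 = 0) (hh0 : h 0 = 0) (hK0 : K 0 = 0)
    (hJacBound : ∃ B : ℝ, ∀ (x : Euc N) (ξ : Bool),
      ‖fderiv ℝ (fun y => gmap f h K y ξ) x‖ ≤ B)
    (p : ℝ) (hp0 : 0 < p) (hp1 : p < 1)
    (L β : ℝ) (hβ0 : 0 < β) (hβ1 : β < 1)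
    (hMSE : ∀ (x0 e0 : Euc N) (t : ℕ),
      erasureExp p t (fun ξ => ‖errSeq f h K x0 e0 ξ (t + 1)‖ ^ 2) ≤
        L * β ^ t * ‖e0‖ ^ 2) :
    ∀ (x0 η0 : Euc N) (t : ℕ),
      erasureExp p t (fun ξ => ‖etaSeq f h K x0 η0 ξ (t + 1)‖ ^ 2) ≤
        L * β ^ t * ‖η0‖ ^ 2 :=
  mse_stability_of_error_implies_mse_stability_of_linearized_general f h K hf hh hK p L β hMSE

end
end

section
/- Let Q be an N×N real positive definite matrix, let A be an invertible N×N real matrix, let C be an M×N real matrix of rank M with M ≤ N, and let 0 ≤ p < 1. Then the matrix A Q Aᵀ − p·A Q Cᵀ (C Q Cᵀ)^{-1} C Q Aᵀ is positive definite and its determinant equals (1−p)^M · (det A)² · det Q. -/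
/-!
The matrix factors as `A R Aᵀ` with `R = (1 - p) Q + p (Q - Q Cᵀ (C Q Cᵀ)⁻¹ C Q)`. The bracket is
the Schur complement of `C Q Cᵀ` in the Gram matrix `[I; C] Q [I; C]ᵀ`, hence positive
semidefinite, so `R` is positive definite. For the determinant, `R = Q (I - p Cᵀ Y)` with
`Y Cᵀ = I`, and Sylvester's identity `det (I - X Y) = det (I - Y X)` gives `det R = (1 - p)^M det Q`.
-/

open Matrix

namespace Matrix

variable {m n : Type*} [Fintype m] [Fintype n]

theorem vecMul_injective_of_rank_eq_card {K : Type*} [Field K] {C : Matrix m n K}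
    (hC : C.rank = Fintype.card m) : Function.Injective C.vecMul := by
  rw [vecMul_injective_iff, linearIndependent_iff_card_eq_finrank_span, Set.finrank,
    ← rank_eq_finrank_span_row, hC]

section CommRing

variable {R : Type*} [CommRing R] [DecidableEq m] [DecidableEq n]

theorem det_one_sub_smul_mul_of_mul_eq_one {X : Matrix n m R} {Y : Matrix m n R}
    (hYX : Y * X = 1) (c : R) : det (1 - c • (X * Y)) = (1 - c) ^ Fintype.card m := by
  have h : (1 : Matrix m m R) - c • 1 = (1 - c) • 1 := by rw [sub_smul, one_smul]
  rw [← smul_mul, det_one_sub_mul_comm, Matrix.mul_smul, hYX, h, det_smul, det_one, mul_one]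

theorem det_sub_smul_mul_inv_mul {Q : Matrix n n R} {B : Matrix n m R} {C : Matrix m n R}
    (hK : IsUnit (C * Q * B).det) (c : R) :
    det (Q - c • (Q * B * (C * Q * B)⁻¹ * (C * Q))) = (1 - c) ^ Fintype.card m * Q.det := by
  have hYX : ((C * Q * B)⁻¹ * (C * Q)) * B = 1 := by
    rw [Matrix.mul_assoc, nonsing_inv_mul _ hK]
  rw [← det_one_sub_smul_mul_of_mul_eq_one hYX c, mul_comm, ← det_mul]
  congr 1
  simp only [Matrix.mul_sub, Matrix.mul_one, Matrix.mul_smul, Matrix.mul_assoc]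

end CommRing

section OrderedField

variable {K : Type*} [Field K] [PartialOrder K] [StarRing K] [StarOrderedRing K]
  [DecidableEq m] [DecidableEq n] {Q : Matrix n n K} {C : Matrix m n K}

theorem PosSemidef.sub_mul_conjTranspose_mul_inv_mul (hQ : Q.PosSemidef)
    (hK : (C * Q * Cᴴ).PosDef) : (Q - Q * Cᴴ * (C * Q * Cᴴ)⁻¹ * (C * Q)).PosSemidef := by
  have := hK.isUnit.invertible
  have hCQ : (Q * Cᴴ)ᴴ = C * Q := by rw [conjTranspose_mul, conjTranspose_conjTranspose, hQ.1.eq]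
  have hgram : fromRows 1 C * Q * (fromRows 1 C)ᴴ =
      fromBlocks Q (Q * Cᴴ) (Q * Cᴴ)ᴴ (C * Q * Cᴴ) := by
    rw [conjTranspose_fromRows_eq_fromCols_conjTranspose, fromRows_mul, fromRows_mul_fromCols,
      hCQ]
    simp only [Matrix.one_mul, Matrix.mul_one, conjTranspose_one]
  have h := (PosDef.fromBlocks₂₂ _ _ hK).mp (hgram ▸ hQ.mul_mul_conjTranspose_same (fromRows 1 C))
  rwa [hCQ] at h

theorem PosDef.sub_smul_mul_conjTranspose_mul_inv_mul [PosMulStrictMono K] (hQ : Q.PosDef)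
    (hK : (C * Q * Cᴴ).PosDef) {p : K} (hp0 : 0 ≤ p) (hp1 : p < 1) :
    (Q - p • (Q * Cᴴ * (C * Q * Cᴴ)⁻¹ * (C * Q))).PosDef := by
  have hsplit : Q - p • (Q * Cᴴ * (C * Q * Cᴴ)⁻¹ * (C * Q)) =
      (1 - p) • Q + p • (Q - Q * Cᴴ * (C * Q * Cᴴ)⁻¹ * (C * Q)) := by
    module
  rw [hsplit]
  exact (hQ.smul (sub_pos.mpr hp1)).add_posSemidef
    ((hQ.posSemidef.sub_mul_conjTranspose_mul_inv_mul hK).smul hp0)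

end OrderedField

end Matrix

theorem riccati_rhs_posDef_and_det_general {N M : ℕ}
    (Q A : Matrix (Fin N) (Fin N) ℝ) (C : Matrix (Fin M) (Fin N) ℝ) (p : ℝ)
    (hQ : Q.PosDef) (hA : A.det ≠ 0) (hC : C.rank = M)
    (hp0 : 0 ≤ p) (hp1 : p < 1) :
    (A * Q * Aᵀ - p • (A * Q * Cᵀ * (C * Q * Cᵀ)⁻¹ * (C * Q * Aᵀ))).PosDef ∧
    (A * Q * Aᵀ - p • (A * Q * Cᵀ * (C * Q * Cᵀ)⁻¹ * (C * Q * Aᵀ))).det =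
      (1 - p) ^ M * A.det ^ 2 * Q.det := by
  have hK : (C * Q * Cᴴ).PosDef :=
    hQ.mul_mul_conjTranspose_same (vecMul_injective_of_rank_eq_card (by simpa using hC))
  have hR := hQ.sub_smul_mul_conjTranspose_mul_inv_mul hK hp0 hp1
  simp only [conjTranspose_eq_transpose_of_trivial] at hK hR
  have hfactor : A * Q * Aᵀ - p • (A * Q * Cᵀ * (C * Q * Cᵀ)⁻¹ * (C * Q * Aᵀ)) =
      A * (Q - p • (Q * Cᵀ * (C * Q * Cᵀ)⁻¹ * (C * Q))) * Aᵀ := by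
    simp only [Matrix.mul_sub, Matrix.sub_mul, Matrix.mul_smul, Matrix.smul_mul, Matrix.mul_assoc]
  rw [hfactor]
  constructor
  · simpa using hR.mul_mul_conjTranspose_same (vecMul_injective_iff_isUnit.mpr
      ((isUnit_iff_isUnit_det A).mpr hA.isUnit))
  · rw [det_mul, det_mul, det_transpose, det_sub_smul_mul_inv_mul hK.det_pos.ne'.isUnit,
      Fintype.card_fin]
    ring

/-- For `0 ≤ p < 1`, the matrix
`A Q Aᵀ − p·A Q Cᵀ (C Q Cᵀ)⁻¹ C Q Aᵀ` is positive definite, with determinant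
`(1−p)^M (det A)² det Q`. -/
theorem riccati_rhs_posDef_and_det {N M : ℕ}
    (Q A : Matrix (Fin N) (Fin N) ℝ) (C : Matrix (Fin M) (Fin N) ℝ) (p : ℝ)
    (hQ : Q.PosDef) (hA : A.det ≠ 0) (hMN : M ≤ N) (hC : C.rank = M)
    (hp0 : 0 ≤ p) (hp1 : p < 1) :
    (A * Q * Aᵀ - p • (A * Q * Cᵀ * (C * Q * Cᵀ)⁻¹ * (C * Q * Aᵀ))).PosDef ∧
    (A * Q * Aᵀ - p • (A * Q * Cᵀ * (C * Q * Cᵀ)⁻¹ * (C * Q * Aᵀ))).det =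
      (1 - p) ^ M * A.det ^ 2 * Q.det :=
  riccati_rhs_posDef_and_det_general Q A C p hQ hA hC hp0 hp1
end

section
/- Let X ⊆ ℝ^N be a compact set, let f : X → X be a measurable map preserving an ergodic Borel probability measure μ on X, let A : X → GL(N,ℝ) be measurable with x ↦ log|det A(x)| μ-integrable, and let M ≥ 1, 0 < p < 1. Suppose there exists a map Q : X → Sym(N,ℝ) taking positive definite values with d_1 ≤ det Q(x) ≤ d_2 for all x ∈ X and some constants 0 < d_1 ≤ d_2, such that (1−p)^M · (det A(x))² · det Q(x) < det Q(f(x)) for all x ∈ X. Then M·log(1−p) + 2·∫_X log|det A(x)| dμ(x) ≤ 0; equivalently, (1−p)^M · exp(2·∫_X log|det A(x)| dμ(x)) ≤ 1. -/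
/-!
Taking logarithms, the per-step inequality says that `g = M log(1-p) + 2 log|det A|` is bounded
above by the coboundary `h ∘ f - h` of the bounded function `h = log det Q`. Along an orbit the
Birkhoff sums of `g` therefore stay below `log d₂ - log d₁`; integrating against the invariant
measure gives `n ∫ g ≤ log d₂ - log d₁` for every `n`, hence `∫ g ≤ 0`.
-/

open Matrix MeasureTheory

noncomputable section

section BirkhoffSum

variable {α : Type*} (f : α → α)

theorem birkhoffSum_coboundary {G : Type*} [AddCommGroup G] (h : α → G) (n : ℕ) (x : α) :
    birkhoffSum f (fun y => h (f y) - h y) n x = h (f^[n] x) - h x := by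
  simp only [birkhoffSum, ← Function.iterate_succ_apply' f]
  exact Finset.sum_range_sub (fun k => h (f^[k] x)) n

theorem birkhoffSum_mono {M : Type*} [AddCommMonoid M] [PartialOrder M] [IsOrderedAddMonoid M]
    {g g' : α → M} (hg : g ≤ g') (n : ℕ) (x : α) :
    birkhoffSum f g n x ≤ birkhoffSum f g' n x :=
  Finset.sum_le_sum fun _ _ => hg _

end BirkhoffSum

namespace MeasureTheory.MeasurePreserving

variable {α : Type*} [MeasurableSpace α] {μ : Measure α}
  {E : Type*} [NormedAddCommGroup E]

theorem integral_comp_of_aestronglyMeasurable [NormedSpace ℝ E] {β : Type*} [MeasurableSpace β]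
    {ν : Measure β} {f : α → β} (hf : MeasurePreserving f μ ν) {g : β → E}
    (hg : AEStronglyMeasurable g ν) :
    ∫ x, g (f x) ∂μ = ∫ y, g y ∂ν := by
  rw [← hf.map_eq] at hg ⊢
  exact (integral_map hf.measurable.aemeasurable hg).symm

variable {f : α → α} (hf : MeasurePreserving f μ μ)
include hf

section
variable {g : α → E} (hg : Integrable g μ)
include hg

theorem integrable_birkhoffSum (n : ℕ) : Integrable (birkhoffSum f g n) μ :=
  integrable_finsetSum _ fun k _ => (hf.iterate k).integrable_comp_of_integrable hg

theorem integral_birkhoffSum [NormedSpace ℝ E] (n : ℕ) :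
    ∫ x, birkhoffSum f g n x ∂μ = n • ∫ x, g x ∂μ := by
  have hk (k : ℕ) : Integrable (fun x => g (f^[k] x)) μ :=
    (hf.iterate k).integrable_comp_of_integrable hg
  simp only [birkhoffSum]
  rw [integral_finsetSum _ fun k _ => hk k]
  simp [(hf.iterate _).integral_comp_of_aestronglyMeasurable hg.aestronglyMeasurable]

end

theorem integral_nonpos_of_le_coboundary [IsFiniteMeasure μ] {g h : α → ℝ}
    (hg : Integrable g μ) {a b : ℝ} (hh : ∀ x, h x ∈ Set.Icc a b)
    (hgh : ∀ x, g x ≤ h (f x) - h x) :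
    ∫ x, g x ∂μ ≤ 0 := by
  have hbound : ∀ n : ℕ, n * ∫ x, g x ∂μ ≤ μ.real Set.univ * (b - a) := fun n => by
    have hsum : ∀ x, birkhoffSum f g n x ≤ b - a := fun x => by
      have := birkhoffSum_mono f hgh n x
      rw [birkhoffSum_coboundary] at this
      linarith [(hh (f^[n] x)).2, (hh x).1]
    simpa [hf.integral_birkhoffSum hg] using
      integral_mono (hf.integrable_birkhoffSum hg n) (integrable_const (b - a)) hsum
  by_contra! hpos
  obtain ⟨n, hn⟩ := exists_nat_gt (μ.real Set.univ * (b - a) / ∫ x, g x ∂μ)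
  rw [div_lt_iff₀ hpos] at hn
  linarith [hbound n]

end MeasureTheory.MeasurePreserving

theorem log_add_two_mul_log_abs_add_log_le {r a q q' : ℝ} (hr : 0 < r) (ha : a ≠ 0) (hq : 0 < q)
    (h : r * a ^ 2 * q < q') :
    Real.log r + 2 * Real.log |a| + Real.log q ≤ Real.log q' :=
  calc Real.log r + 2 * Real.log |a| + Real.log q = Real.log (r * a ^ 2 * q) := by
        rw [Real.log_mul (by positivity) hq.ne', Real.log_mul hr.ne' (by positivity), Real.log_pow,
          Real.log_abs, Nat.cast_ofNat]
    _ ≤ Real.log q' := Real.log_le_log (by positivity) h.le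

theorem ergodic_mse_limitation_general {N : ℕ} (M : ℕ)
    (X : Set (Euc N))
    (f : X → X) (μ : Measure X) [IsProbabilityMeasure μ] (hf : Ergodic f μ)
    (A : X → Matrix (Fin N) (Fin N) ℝ)
    (hA : ∀ x : X, (A x).det ≠ 0)
    (hInt : Integrable (fun x : X => Real.log |(A x).det|) μ)
    (p : ℝ) (hp1 : p < 1)
    (Q : X → Matrix (Fin N) (Fin N) ℝ)
    (d₁ d₂ : ℝ) (hd₁ : 0 < d₁)
    (hdet : ∀ x : X, d₁ ≤ (Q x).det ∧ (Q x).det ≤ d₂)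
    (hstep : ∀ x : X, (1 - p) ^ M * (A x).det ^ 2 * (Q x).det < (Q (f x)).det) :
    (M : ℝ) * Real.log (1 - p) + 2 * ∫ x, Real.log |(A x).det| ∂μ ≤ 0 ∧
    (1 - p) ^ M * Real.exp (2 * ∫ x, Real.log |(A x).det| ∂μ) ≤ 1 := by
  have hp : 0 < (1 - p) ^ M := pow_pos (sub_pos.2 hp1) M
  have hQ : ∀ x, 0 < (Q x).det := fun x => hd₁.trans_le (hdet x).1
  have hg : Integrable (fun x => M * Real.log (1 - p) + 2 * Real.log |(A x).det|) μ :=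
    (integrable_const _).add (hInt.const_mul 2)
  have hmain := hf.toMeasurePreserving.integral_nonpos_of_le_coboundary hg
    (h := fun x => Real.log (Q x).det)
    (fun x => ⟨Real.log_le_log hd₁ (hdet x).1, Real.log_le_log (hQ x) (hdet x).2⟩)
    fun x => by
      have := log_add_two_mul_log_abs_add_log_le hp (hA x) (hQ x) (hstep x)
      rw [Real.log_pow] at this
      linarith
  rw [integral_add (integrable_const _) (hInt.const_mul 2), integral_const, integral_const_mul,
    probReal_univ, one_smul] at hmain
  refine ⟨hmain, ?_⟩
  rw [← Real.exp_log hp, ← Real.exp_add, Real.log_pow]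
  exact Real.exp_le_one_iff.2 hmain

/-- **ergodic limitation.** On a compact `X ⊆ ℝ^N`, if `f` preserves an ergodic
probability measure `μ`, `log|det A|` is integrable, and a positive definite `Q` with uniformly
bounded determinant satisfies the per-step inequality
`(1−p)^M (det A(x))² det Q(x) < det Q(f(x))`, then
`M·log(1−p) + 2·∫ log|det A| dμ ≤ 0`; equivalently
`(1−p)^M · exp(2·∫ log|det A| dμ) ≤ 1`. -/
theorem ergodic_mse_limitation {N : ℕ} (M : ℕ) (hM : 1 ≤ M)
    (X : Set (Euc N)) (hX : IsCompact X)
    (f : X → X) (μ : Measure X) [IsProbabilityMeasure μ] (hf : Ergodic f μ)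
    (A : X → Matrix (Fin N) (Fin N) ℝ)
    (hAmeas : ∀ i j, Measurable fun x : X => A x i j)
    (hA : ∀ x : X, (A x).det ≠ 0)
    (hInt : Integrable (fun x : X => Real.log |(A x).det|) μ)
    (p : ℝ) (hp0 : 0 < p) (hp1 : p < 1)
    (Q : X → Matrix (Fin N) (Fin N) ℝ)
    (hQsymm : ∀ x : X, (Q x).IsSymm) (hQpos : ∀ x : X, (Q x).PosDef)
    (d₁ d₂ : ℝ) (hd₁ : 0 < d₁) (hd₁₂ : d₁ ≤ d₂)
    (hdet : ∀ x : X, d₁ ≤ (Q x).det ∧ (Q x).det ≤ d₂)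
    (hstep : ∀ x : X, (1 - p) ^ M * (A x).det ^ 2 * (Q x).det < (Q (f x)).det) :
    (M : ℝ) * Real.log (1 - p) + 2 * ∫ x, Real.log |(A x).det| ∂μ ≤ 0 ∧
    (1 - p) ^ M * Real.exp (2 * ∫ x, Real.log |(A x).det| ∂μ) ≤ 1 :=
  ergodic_mse_limitation_general M X f μ hf A hA hInt p hp1 Q d₁ d₂ hd₁ hdet hstep

end
end
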